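/- Let S₀ and S₁ be nonempty finite disjoint index sets, let z_j ∈ ℝ^F for j ∈ S₀ ∪ S₁, and let h_j = σ(z_j) where σ : ℝ → ℝ is an L-Lipschitz activation applied entrywise. Suppose ‖z_j − z̄_s‖_∞ ≤ Δ for every j ∈ S_s, s = 0,1, where z̄_s is the group mean of the z_j over S_s. Then the group means h̄_s of the h_j satisfy ‖h̄₀ − h̄₁‖₂ ≤ L ( ‖z̄₀ − z̄₁‖₂ + 2√F Δ ). -/

import Mathlib

/-!
Each mean `h̄_s` differs from `σ(z̄_s)` by at most `L Δ` in every coordinate, because the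
mean of the values `σ(z_j i)`, all within `L Δ` of `σ(z̄_s i)`, stays within `L Δ` of it;
so `‖h̄_s - σ(z̄_s)‖₂ ≤ √F L Δ`. The entrywise activation is `L`-Lipschitz for `‖·‖₂`, so
`‖σ(z̄₀) - σ(z̄₁)‖₂ ≤ L ‖z̄₀ - z̄₁‖₂`, and the triangle inequality concludes.
-/

open Finset

/-- Group mean of vectors over a finite index set. -/
noncomputable def gmean {V : Type*} {d : ℕ} (S : Finset V)
    (x : V → EuclideanSpace ℝ (Fin d)) : EuclideanSpace ℝ (Fin d) :=
  (S.card : ℝ)⁻¹ • ∑ j ∈ S, x j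

lemma Convex.inv_card_smul_sum_mem {ι E : Type*} [AddCommGroup E] [Module ℝ E] {s : Set E}
    (hs : Convex ℝ s) {S : Finset ι} (hS : S.Nonempty) {x : ι → E} (hx : ∀ j ∈ S, x j ∈ s) :
    (S.card : ℝ)⁻¹ • ∑ j ∈ S, x j ∈ s := by
  rw [smul_sum]
  refine hs.sum_mem (fun _ _ => by positivity) ?_ hx
  rw [sum_const, nsmul_eq_mul, mul_inv_cancel₀ (by exact_mod_cast hS.card_ne_zero)]

lemma abs_inv_card_mul_sum_sub_le {ι : Type*} {S : Finset ι} (hS : S.Nonempty) {a : ι → ℝ}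
    {c C : ℝ} (ha : ∀ j ∈ S, |a j - c| ≤ C) : |(S.card : ℝ)⁻¹ * ∑ j ∈ S, a j - c| ≤ C := by
  simpa only [Metric.mem_closedBall, Real.dist_eq, smul_eq_mul] using
    (convex_closedBall c C).inv_card_smul_sum_mem hS (x := a)
      (fun j hj => by simpa only [Metric.mem_closedBall, Real.dist_eq] using ha j hj)

lemma nonneg_of_forall_abs_sub_le_mul {σ : ℝ → ℝ} {L : ℝ}
    (hσ : ∀ a b, |σ a - σ b| ≤ L * |a - b|) : 0 ≤ L := by
  simpa using (abs_nonneg _).trans (hσ 1 0)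

namespace EuclideanSpace

variable {ι : Type*} [Fintype ι]

lemma norm_le_norm_of_forall_abs_le {x y : EuclideanSpace ℝ ι} (hxy : ∀ i, |x i| ≤ |y i|) :
    ‖x‖ ≤ ‖y‖ := by
  simp only [norm_eq, Real.norm_eq_abs]
  exact Real.sqrt_le_sqrt (sum_le_sum fun i _ => pow_le_pow_left₀ (abs_nonneg _) (hxy i) 2)

lemma norm_le_sqrt_card_mul {x : EuclideanSpace ℝ ι} {C : ℝ} (hx : ∀ i, |x i| ≤ C) :
    ‖x‖ ≤ √(Fintype.card ι) * C := by
  rcases isEmpty_or_nonempty ι with hι | ⟨⟨i₀⟩⟩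
  · simp [Subsingleton.elim x 0]
  have hC : 0 ≤ C := (abs_nonneg _).trans (hx i₀)
  calc ‖x‖ = √(∑ i, |x i| ^ 2) := by simp only [norm_eq, Real.norm_eq_abs]
    _ ≤ √(∑ _ : ι, C ^ 2) := by gcongr with i; exact hx i
    _ = √(Fintype.card ι) * C := by
      rw [sum_const, card_univ, nsmul_eq_mul, Real.sqrt_mul (Nat.cast_nonneg _),
        Real.sqrt_sq hC]

lemma norm_toLp_comp_sub_le {σ : ℝ → ℝ} {L : ℝ} (hσ : ∀ a b, |σ a - σ b| ≤ L * |a - b|)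
    (x y : EuclideanSpace ℝ ι) :
    ‖WithLp.toLp 2 (fun i => σ (x i)) - WithLp.toLp 2 (fun i => σ (y i))‖ ≤ L * ‖x - y‖ := by
  have hL := nonneg_of_forall_abs_sub_le_mul hσ
  calc _ ≤ ‖L • (x - y)‖ := norm_le_norm_of_forall_abs_le fun i => by
        simpa [abs_mul, abs_of_nonneg hL] using hσ (x i) (y i)
    _ = L * ‖x - y‖ := by rw [norm_smul, Real.norm_of_nonneg hL]

end EuclideanSpace

lemma gmean_apply {ι : Type*} {d : ℕ} (S : Finset ι) (x : ι → EuclideanSpace ℝ (Fin d))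
    (i : Fin d) : gmean S x i = (S.card : ℝ)⁻¹ * ∑ j ∈ S, x j i := by
  simp [gmean]

lemma norm_gmean_sub_toLp_comp_gmean_le {ι : Type*} {F : ℕ} {S : Finset ι} (hS : S.Nonempty)
    {z h : ι → EuclideanSpace ℝ (Fin F)} {σ : ℝ → ℝ} {L Δ : ℝ}
    (hσ : ∀ a b, |σ a - σ b| ≤ L * |a - b|) (hh : ∀ j i, h j i = σ (z j i))
    (hdev : ∀ j ∈ S, ∀ i, |z j i - gmean S z i| ≤ Δ) :
    ‖gmean S h - WithLp.toLp 2 (fun i => σ (gmean S z i))‖ ≤ √F * (L * Δ) := by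
  have hL := nonneg_of_forall_abs_sub_le_mul hσ
  have hcoord : ∀ i, |(gmean S h - WithLp.toLp 2 (fun i => σ (gmean S z i))) i| ≤ L * Δ := by
    intro i
    simp only [PiLp.sub_apply, gmean_apply S h, hh]
    exact abs_inv_card_mul_sum_sub_le hS fun j hj =>
      (hσ _ _).trans (mul_le_mul_of_nonneg_left (hdev j hj i) hL)
  simpa using EuclideanSpace.norm_le_sqrt_card_mul hcoord

theorem activated_mean_disparity_bound_general
    {ι : Type*} {F : ℕ} (S₀ S₁ : Finset ι)
    (hS₀ : S₀.Nonempty) (hS₁ : S₁.Nonempty)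
    (z : ι → EuclideanSpace ℝ (Fin F))
    (σ : ℝ → ℝ) (L : ℝ) (hσ : ∀ a b, |σ a - σ b| ≤ L * |a - b|)
    (h : ι → EuclideanSpace ℝ (Fin F)) (hh : ∀ j i, h j i = σ (z j i))
    (Δ : ℝ)
    (hdev₀ : ∀ j ∈ S₀, ∀ i, |z j i - gmean S₀ z i| ≤ Δ)
    (hdev₁ : ∀ j ∈ S₁, ∀ i, |z j i - gmean S₁ z i| ≤ Δ) :
    ‖gmean S₀ h - gmean S₁ h‖ ≤
      L * (‖gmean S₀ z - gmean S₁ z‖ + 2 * Real.sqrt F * Δ) := by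
  set u₀ : EuclideanSpace ℝ (Fin F) := WithLp.toLp 2 (fun i => σ (gmean S₀ z i))
  set u₁ : EuclideanSpace ℝ (Fin F) := WithLp.toLp 2 (fun i => σ (gmean S₁ z i))
  have h₀ : ‖gmean S₀ h - u₀‖ ≤ √F * (L * Δ) :=
    norm_gmean_sub_toLp_comp_gmean_le hS₀ hσ hh hdev₀
  have h₁ : ‖gmean S₁ h - u₁‖ ≤ √F * (L * Δ) :=
    norm_gmean_sub_toLp_comp_gmean_le hS₁ hσ hh hdev₁
  have hu : ‖u₀ - u₁‖ ≤ L * ‖gmean S₀ z - gmean S₁ z‖ :=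
    EuclideanSpace.norm_toLp_comp_sub_le hσ _ _
  calc ‖gmean S₀ h - gmean S₁ h‖
      ≤ ‖gmean S₀ h - u₀‖ + ‖u₀ - u₁‖ + ‖gmean S₁ h - u₁‖ := by
        have := norm_sub_le_norm_sub_add_norm_sub (gmean S₀ h) u₀ (gmean S₁ h)
        have := norm_sub_le_norm_sub_add_norm_sub u₀ u₁ (gmean S₁ h)
        rw [norm_sub_rev u₁] at this
        linarith
    _ ≤ √F * (L * Δ) + L * ‖gmean S₀ z - gmean S₁ z‖ + √F * (L * Δ) := by gcongr
    _ = L * (‖gmean S₀ z - gmean S₁ z‖ + 2 * Real.sqrt F * Δ) := by ring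

/-- Lemma 2 (appendix): the disparity between the group means of entrywise-activated
representations is controlled by the disparity of the pre-activation group means plus a
deviation term. -/
theorem activated_mean_disparity_bound
    {ι : Type*} {F : ℕ} (S₀ S₁ : Finset ι)
    (hS₀ : S₀.Nonempty) (hS₁ : S₁.Nonempty) (hdisj : Disjoint S₀ S₁)
    (z : ι → EuclideanSpace ℝ (Fin F))
    (σ : ℝ → ℝ) (L : ℝ) (hσ : ∀ a b, |σ a - σ b| ≤ L * |a - b|)
    (h : ι → EuclideanSpace ℝ (Fin F)) (hh : ∀ j i, h j i = σ (z j i))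
    (Δ : ℝ)
    (hdev₀ : ∀ j ∈ S₀, ∀ i, |z j i - gmean S₀ z i| ≤ Δ)
    (hdev₁ : ∀ j ∈ S₁, ∀ i, |z j i - gmean S₁ z i| ≤ Δ) :
    ‖gmean S₀ h - gmean S₁ h‖ ≤
      L * (‖gmean S₀ z - gmean S₁ z‖ + 2 * Real.sqrt F * Δ) :=
  activated_mean_disparity_bound_general S₀ S₁ hS₀ hS₁ z σ L hσ h hh Δ hdev₀ hdev₁
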